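/- Let R be a binary relation on the nodes of a λ-graph. The spreading R⇓ is homogeneous if and only if the propagation R↓ is homogeneous. -/
import Mathlib


/-- Directions for paths in a λ-graph. -/
inductive Dir : Type where
  | left | body | right
deriving DecidableEq

/-- Labels of nodes of a (pre–)λ-graph. -/
inductive NodeLabel (Node Name : Type) : Type where
  | app (l r : Node)
  | abs (body : Node)
  | fvar (name : Name)
  | bvar (binder : Node)

/-- The four kinds of nodes. -/
inductive NodeKind : Type where
  | app | abs | fvar | bvar
deriving DecidableEq

/-- The kind of a node label. -/
def NodeLabel.kind {Node Name : Type} : NodeLabel Node Name → NodeKind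
  | .app _ _ => .app
  | .abs _ => .abs
  | .fvar _ => .fvar
  | .bvar _ => .bvar

/-- Locally nameless λ-terms. -/
inductive Term (Name : Type) : Type where
  | bvar (i : ℕ)
  | fvar (a : Name)
  | app (t s : Term Name)
  | lam (t : Term Name)

/-- Reflexive–symmetric–transitive closure `R*` of a relation. -/
inductive RstClosure {α : Type _} (R : α → α → Prop) : α → α → Prop where
  | base {a b : α} : R a b → RstClosure R a b
  | refl (a : α) : RstClosure R a a
  | symm {a b : α} : RstClosure R a b → RstClosure R b a
  | trans {a b c : α} : RstClosure R a b → RstClosure R b c → RstClosure R a c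

/-- A pre–λ-graph: every node carries a label; the binder of a bound variable node is an
abstraction node; the name of a free variable node uniquely identifies it. -/
structure PreLamGraph (Node Name : Type) : Type where
  label : Node → NodeLabel Node Name
  binder_abs : ∀ n l, label n = .bvar l → ∃ b, label l = .abs b
  fvar_inj : ∀ n m a, label n = .fvar a → label m = .fvar a → n = m

namespace PreLamGraph

variable {Node Name : Type}

/-- `Path G τ n m`: there is a path from `n` to `m` with trace `τ`
(binding edges are never followed). -/
inductive Path (G : PreLamGraph Node Name) : List Dir → Node → Node → Prop where
  | nil (n : Node) : Path G [] n n
  | abs {τ : List Dir} {n m b : Node} :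
      Path G τ n m → G.label m = .abs b → Path G (.body :: τ) n b
  | appL {τ : List Dir} {n m l r : Node} :
      Path G τ n m → G.label m = .app l r → Path G (.left :: τ) n l
  | appR {τ : List Dir} {n m l r : Node} :
      Path G τ n m → G.label m = .app l r → Path G (.right :: τ) n r

/-- `r` is a root: the only path ending at `r` is the empty path from `r` itself. -/
def Root (G : PreLamGraph Node Name) (r : Node) : Prop :=
  ∀ (τ : List Dir) (n : Node), G.Path τ n r → τ = []

/-- `Crosses G τ n p`: the path from `n` with trace `τ` crosses the node `p`. -/
inductive Crosses (G : PreLamGraph Node Name) : List Dir → Node → Node → Prop where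
  | here {τ : List Dir} {n p : Node} : G.Path τ n p → Crosses G τ n p
  | step {d : Dir} {τ : List Dir} {n p m : Node} :
      Crosses G τ n p → G.Path (d :: τ) n m → Crosses G (d :: τ) n p

/-- `m` dominates `n`: every path from a root to `n` crosses `m`. -/
def Dominates (G : PreLamGraph Node Name) (m n : Node) : Prop :=
  ∀ (r : Node) (τ : List Dir), G.Root r → G.Path τ r n → G.Crosses τ r m

/-- Acyclicity: a path from a node to itself must have empty trace. -/
def Acyclic (G : PreLamGraph Node Name) : Prop :=
  ∀ (n : Node) (τ : List Dir), G.Path τ n n → τ = []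

/-- Every bound variable node is dominated by its binder. -/
def Dominated (G : PreLamGraph Node Name) : Prop :=
  ∀ (n l : Node), G.label n = .bvar l → G.Dominates l n

/-- A query relates only root nodes. -/
def IsQuery (G : PreLamGraph Node Name) (Q : Node → Node → Prop) : Prop :=
  ∀ n m, Q n m → G.Root n ∧ G.Root m

/-- A relation is homogeneous if it only relates nodes of the same kind. -/
def Homogeneous (G : PreLamGraph Node Name) (R : Node → Node → Prop) : Prop :=
  ∀ n m, R n m → (G.label n).kind = (G.label m).kind

/-- Closure under the left propagation rule. -/
def ClosedAppL (G : PreLamGraph Node Name) (R : Node → Node → Prop) : Prop :=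
  ∀ n m n1 n2 m1 m2, G.label n = .app n1 n2 → G.label m = .app m1 m2 → R n m → R n1 m1

/-- Closure under the right propagation rule. -/
def ClosedAppR (G : PreLamGraph Node Name) (R : Node → Node → Prop) : Prop :=
  ∀ n m n1 n2 m1 m2, G.label n = .app n1 n2 → G.label m = .app m1 m2 → R n m → R n2 m2

/-- Closure under the body propagation rule. -/
def ClosedAbs (G : PreLamGraph Node Name) (R : Node → Node → Prop) : Prop :=
  ∀ n m n' m', G.label n = .abs n' → G.label m = .abs m' → R n m → R n' m'

/-- Closure under the scoping rule. -/
def ClosedScope (G : PreLamGraph Node Name) (R : Node → Node → Prop) : Prop :=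
  ∀ n m l l', G.label n = .bvar l → G.label m = .bvar l' → R n m → R l l'

/-- Closure under the three propagation rules. -/
def ClosedProp (G : PreLamGraph Node Name) (R : Node → Node → Prop) : Prop :=
  G.ClosedAppL R ∧ G.ClosedAppR R ∧ G.ClosedAbs R

/-- A blind bisimulation is a homogeneous relation closed under the propagation rules. -/
def BlindBisimulation (G : PreLamGraph Node Name) (R : Node → Node → Prop) : Prop :=
  G.Homogeneous R ∧ G.ClosedProp R

/-- A bisimulation is a homogeneous relation closed under the propagation rules
and the scoping rule. -/
def Bisimulation (G : PreLamGraph Node Name) (R : Node → Node → Prop) : Prop :=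
  G.BlindBisimulation R ∧ G.ClosedScope R

/-- A relation is open if whenever it relates two free variable nodes they are equal. -/
def OpenRel (G : PreLamGraph Node Name) (R : Node → Node → Prop) : Prop :=
  ∀ n m a b, G.label n = .fvar a → G.label m = .fvar b → R n m → n = m

/-- A sharing equivalence is an open bisimulation that is also an equivalence relation. -/
def SharingEquivalence (G : PreLamGraph Node Name) (R : Node → Node → Prop) : Prop :=
  G.OpenRel R ∧ G.Bisimulation R ∧ Equivalence R

/-- A blind sharing equivalence is an equivalence relation that is a blind bisimulation. -/
def BlindSharingEquivalence (G : PreLamGraph Node Name) (R : Node → Node → Prop) : Prop :=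
  Equivalence R ∧ G.BlindBisimulation R

/-- The propagation `R↓`: the smallest relation containing `R` and closed under the
propagation rules. -/
inductive Propagation (G : PreLamGraph Node Name) (R : Node → Node → Prop) :
    Node → Node → Prop where
  | base {n m : Node} : R n m → Propagation G R n m
  | appL {n m n1 n2 m1 m2 : Node} :
      Propagation G R n m → G.label n = .app n1 n2 → G.label m = .app m1 m2 →
      Propagation G R n1 m1
  | appR {n m n1 n2 m1 m2 : Node} :
      Propagation G R n m → G.label n = .app n1 n2 → G.label m = .app m1 m2 →
      Propagation G R n2 m2
  | abs {n m n' m' : Node} :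
      Propagation G R n m → G.label n = .abs n' → G.label m = .abs m' →
      Propagation G R n' m'

/-- The spreading `R⇓`: the smallest equivalence relation containing `R` and closed
under the propagation rules. -/
inductive Spreading (G : PreLamGraph Node Name) (R : Node → Node → Prop) :
    Node → Node → Prop where
  | base {n m : Node} : R n m → Spreading G R n m
  | refl (n : Node) : Spreading G R n n
  | symm {n m : Node} : Spreading G R n m → Spreading G R m n
  | trans {n m p : Node} : Spreading G R n m → Spreading G R m p → Spreading G R n p
  | appL {n m n1 n2 m1 m2 : Node} :
      Spreading G R n m → G.label n = .app n1 n2 → G.label m = .app m1 m2 →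
      Spreading G R n1 m1
  | appR {n m n1 n2 m1 m2 : Node} :
      Spreading G R n m → G.label n = .app n1 n2 → G.label m = .app m1 m2 →
      Spreading G R n2 m2
  | abs {n m n' m' : Node} :
      Spreading G R n m → G.label n = .abs n' → G.label m = .abs m' →
      Spreading G R n' m'

/-- `IndexOf G l n τ k`: the de Bruijn index of the abstraction node `l` along the path
from `n` with trace `τ` (which crosses `l`) is `k`. -/
inductive IndexOf (G : PreLamGraph Node Name) (l n : Node) : List Dir → ℕ → Prop where
  | here {τ : List Dir} : G.Path τ n l → IndexOf G l n τ 0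
  | abs {d : Dir} {τ : List Dir} {m b : Node} {k : ℕ} :
      G.Path (d :: τ) n m → G.label m = .abs b → m ≠ l →
      IndexOf G l n τ k → IndexOf G l n (d :: τ) (k + 1)
  | other {d : Dir} {τ : List Dir} {m : Node} {k : ℕ} :
      G.Path (d :: τ) n m → (∀ b, G.label m ≠ .abs b) →
      IndexOf G l n τ k → IndexOf G l n (d :: τ) k

/-- `Readback G r τ t`: the readback of the endpoint of the access path from `r` with
trace `τ` is the locally nameless term `t`. -/
inductive Readback (G : PreLamGraph Node Name) (r : Node) : List Dir → Term Name → Prop where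
  | bvar {τ : List Dir} {n l : Node} {k : ℕ} :
      G.Path τ r n → G.label n = .bvar l → G.IndexOf l r τ k →
      Readback G r τ (.bvar k)
  | fvar {τ : List Dir} {n : Node} {a : Name} :
      G.Path τ r n → G.label n = .fvar a → Readback G r τ (.fvar a)
  | abs {τ : List Dir} {n b : Node} {t : Term Name} :
      G.Path τ r n → G.label n = .abs b → Readback G r (.body :: τ) t →
      Readback G r τ (.lam t)
  | app {τ : List Dir} {n n1 n2 : Node} {t1 t2 : Term Name} :
      G.Path τ r n → G.label n = .app n1 n2 →
      Readback G r (.left :: τ) t1 → Readback G r (.right :: τ) t2 →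
      Readback G r τ (.app t1 t2)

end PreLamGraph

/-- A λ-graph: a finite, acyclic and dominated pre–λ-graph. -/
structure LamGraph (Node Name : Type) extends PreLamGraph Node Name where
  finite : Finite Node
  acyclic : toPreLamGraph.Acyclic
  dominated : toPreLamGraph.Dominated
section Aux
open PreLamGraph
variable {Node Name : Type} (G : PreLamGraph Node Name) (R : Node → Node → Prop)

lemma kind_app {n n1 n2 m : Node} (h : G.label n = .app n1 n2)
    (hk : (G.label n).kind = (G.label m).kind) : ∃ m1 m2, G.label m = .app m1 m2 := by
  rw [h] at hk; cases hm : G.label m <;> rw [hm] at hk <;> simp [NodeLabel.kind] at hk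
  exact ⟨_, _, rfl⟩

lemma kind_abs {n n' m : Node} (h : G.label n = .abs n')
    (hk : (G.label n).kind = (G.label m).kind) : ∃ m', G.label m = .abs m' := by
  rw [h] at hk; cases hm : G.label m <;> rw [hm] at hk <;> simp [NodeLabel.kind] at hk
  exact ⟨_, rfl⟩

lemma rst_prop_hom (hH : G.Homogeneous (Propagation G R)) :
    G.Homogeneous (RstClosure (Propagation G R)) := by
  intro n m h
  induction h with
  | base h => exact hH _ _ h
  | refl => rfl
  | symm _ ih => exact ih.symm
  | trans _ _ ih1 ih2 => exact ih1.trans ih2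

lemma rst_appL (hH : G.Homogeneous (Propagation G R)) :
    G.ClosedAppL (RstClosure (Propagation G R)) := by
  intro n m n1 n2 m1 m2 hn hm h
  revert hn hm
  induction h generalizing n1 n2 m1 m2 with
  | base h => intro hn hm; exact .base (Propagation.appL h hn hm)
  | refl => intro hn hm; rw [hn] at hm; cases hm; exact .refl _
  | @symm a b h ih => intro hn hm; exact .symm (ih _ _ _ _ hm hn)
  | @trans a b c h1 h2 ih1 ih2 =>
      intro hn hm
      obtain ⟨b1, b2, hb⟩ := kind_app G hn (rst_prop_hom G R hH _ _ h1)
      exact .trans (ih1 _ _ _ _ hn hb) (ih2 _ _ _ _ hb hm)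

lemma rst_appR (hH : G.Homogeneous (Propagation G R)) :
    G.ClosedAppR (RstClosure (Propagation G R)) := by
  intro n m n1 n2 m1 m2 hn hm h
  revert hn hm
  induction h generalizing n1 n2 m1 m2 with
  | base h => intro hn hm; exact .base (Propagation.appR h hn hm)
  | refl => intro hn hm; rw [hn] at hm; cases hm; exact .refl _
  | @symm a b h ih => intro hn hm; exact .symm (ih _ _ _ _ hm hn)
  | @trans a b c h1 h2 ih1 ih2 =>
      intro hn hm
      obtain ⟨b1, b2, hb⟩ := kind_app G hn (rst_prop_hom G R hH _ _ h1)
      exact .trans (ih1 _ _ _ _ hn hb) (ih2 _ _ _ _ hb hm)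

lemma rst_abs (hH : G.Homogeneous (Propagation G R)) :
    G.ClosedAbs (RstClosure (Propagation G R)) := by
  intro n m n' m' hn hm h
  revert hn hm
  induction h generalizing n' m' with
  | base h => intro hn hm; exact .base (Propagation.abs h hn hm)
  | refl => intro hn hm; rw [hn] at hm; cases hm; exact .refl _
  | @symm a b h ih => intro hn hm; exact .symm (ih _ _ hm hn)
  | @trans a b c h1 h2 ih1 ih2 =>
      intro hn hm
      obtain ⟨b', hb⟩ := kind_abs G hn (rst_prop_hom G R hH _ _ h1)
      exact .trans (ih1 _ _ hn hb) (ih2 _ _ hb hm)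

lemma spreading_sub_rst (hH : G.Homogeneous (Propagation G R)) {n m : Node}
    (h : Spreading G R n m) : RstClosure (Propagation G R) n m := by
  induction h with
  | base h => exact .base (.base h)
  | refl => exact .refl _
  | symm _ ih => exact .symm ih
  | trans _ _ ih1 ih2 => exact .trans ih1 ih2
  | appL _ hn hm ih => exact rst_appL G R hH _ _ _ _ _ _ hn hm ih
  | appR _ hn hm ih => exact rst_appR G R hH _ _ _ _ _ _ hn hm ih
  | abs _ hn hm ih => exact rst_abs G R hH _ _ _ _ hn hm ih

lemma prop_sub_spreading {n m : Node} (h : Propagation G R n m) : Spreading G R n m := by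
  induction h with
  | base h => exact .base h
  | appL _ hn hm ih => exact .appL ih hn hm
  | appR _ hn hm ih => exact .appR ih hn hm
  | abs _ hn hm ih => exact .abs ih hn hm

end Aux

open PreLamGraph in
/-- `R⇓` is homogeneous iff `R↓` is homogeneous. -/
theorem spreading_homogeneous_iff {Node Name : Type} (G : LamGraph Node Name)
    (R : Node → Node → Prop) :
    G.toPreLamGraph.Homogeneous (Spreading G.toPreLamGraph R) ↔
      G.toPreLamGraph.Homogeneous (Propagation G.toPreLamGraph R) := by
  constructor
  · intro h n m hp
    exact h n m (prop_sub_spreading _ _ hp)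
  · intro h n m hs
    exact rst_prop_hom _ _ h _ _ (spreading_sub_rst _ _ h hs)
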